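/- Let δ ∈ (0, 1/4) and η ∈ [0, 1/2]. Let e₁, e₂ be i.i.d. with distribution Ber(1/2 − √δ) and let b ∼ Ber(1/2) be independent of (e₁, e₂), and set Z = (e₁ + b, e₂ + b) ∈ 𝔽₂². Suppose there exist independent 𝔽₂²-valued random variables X and Y such that X ∼ Ber(1/2 − η)^{⊗2} (i.e., X₁, X₂ are i.i.d. Ber(1/2 − η)) and X + Y has the same distribution as Z (componentwise sum in 𝔽₂). Then η ≥ √δ. -/

import Mathlib

/-- A probability mass function on a finite type: nonnegative, summing to 1. -/
def IsProbDist {X : Type*} [Fintype X] (p : X → ℝ) : Prop :=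
  (∀ x, 0 ≤ p x) ∧ ∑ x, p x = 1

/-- Bernoulli distribution on `𝔽₂`, taking value `1` with probability `α`. -/
noncomputable def bern (α : ℝ) : ZMod 2 → ℝ := fun z => if z = 1 then α else 1 - α

/-- Pushforward of a mass function on a finite type along a map. -/
noncomputable def pushforward {X Y : Type*} [Fintype X] [DecidableEq Y]
    (f : X → Y) (p : X → ℝ) : Y → ℝ :=
  fun y => ∑ x ∈ Finset.univ.filter (fun x => f x = y), p x

/-- The law of `Z = (e₁ + b, e₂ + b) ∈ 𝔽₂²`, where `e₁, e₂` are i.i.d.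
`Ber(1/2 − √δ)` and `b ∼ Ber(1/2)` is independent of `(e₁, e₂)`. -/
noncomputable def pdist (δ : ℝ) : (Fin 2 → ZMod 2) → ℝ :=
  pushforward (fun w : ZMod 2 × ZMod 2 × ZMod 2 => ![w.1 + w.2.2, w.2.1 + w.2.2])
    (fun w => bern (1 / 2 - Real.sqrt δ) w.1 * bern (1 / 2 - Real.sqrt δ) w.2.1
      * bern (1 / 2) w.2.2)

/-! The character `z ↦ (-1)^(z₁ + z₂)` of `𝔽₂²` is blind to the common flip `b`, so its mean
under the law of `Z` is `(2√δ)²`. Characters turn the law of an independent sum into a product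
of means, and the mean under `X ∼ Ber(1/2 − η)^{⊗2}` is `(2η)²`, while a character mean of any
probability distribution, that of `Y` included, is at most `1`. Hence `4δ ≤ 4η²`. -/

open Finset

theorem sum_mul_pushforward {X Y : Type*} [Fintype X] [Fintype Y] [DecidableEq Y]
    (g : Y → ℝ) (f : X → Y) (p : X → ℝ) :
    ∑ y, g y * pushforward f p y = ∑ x, g (f x) * p x := by
  simp only [pushforward, mul_sum, sum_filter]
  rw [sum_comm]
  simp

theorem sum_mul_le_one_of_isProbDist {X : Type*} [Fintype X] {p : X → ℝ} (hp : IsProbDist p)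
    {g : X → ℝ} (hg : ∀ x, g x ≤ 1) : ∑ x, g x * p x ≤ 1 :=
  hp.2 ▸ sum_le_sum fun x _ => mul_le_of_le_one_left (hp.1 x) (hg x)

theorem AddChar.sum_mul_pushforward_add {G : Type*} [AddMonoid G] [Fintype G]
    [DecidableEq G] (ψ : AddChar G ℝ) (p q : G → ℝ) :
    ∑ z, ψ z * pushforward (fun w : G × G => w.1 + w.2) (fun w => p w.1 * q w.2) z
      = (∑ x, ψ x * p x) * ∑ y, ψ y * q y := by
  rw [sum_mul_pushforward, Fintype.sum_prod_type, sum_mul_sum]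
  refine sum_congr rfl fun x _ => sum_congr rfl fun y _ => ?_
  rw [AddChar.map_add_eq_mul]
  ring

theorem ZMod.forall_two {P : ZMod 2 → Prop} : (∀ a, P a) ↔ P 0 ∧ P 1 :=
  Fin.forall_fin_two

theorem ZMod.sum_univ_two {M : Type*} [AddCommMonoid M] (f : ZMod 2 → M) :
    ∑ a, f a = f 0 + f 1 :=
  Fin.sum_univ_two f

noncomputable def signChar : AddChar (ZMod 2) ℝ where
  toFun a := if a = 1 then -1 else 1
  map_zero_eq_one' := by simp
  map_add_eq_mul' := by
    simp only [ZMod.forall_two]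
    norm_num +decide

noncomputable def parityChar (ι : Type*) [Fintype ι] : AddChar (ι → ZMod 2) ℝ where
  toFun z := ∏ i, signChar (z i)
  map_zero_eq_one' := by simp
  map_add_eq_mul' x y := by simp [AddChar.map_add_eq_mul, prod_mul_distrib]

@[simp] theorem signChar_zero : signChar 0 = 1 := AddChar.map_zero_eq_one _

@[simp] theorem signChar_one : signChar 1 = -1 :=
  show (if (1 : ZMod 2) = 1 then (-1 : ℝ) else 1) = -1 from if_pos rfl

theorem abs_signChar : ∀ a, |signChar a| = 1 :=
  ZMod.forall_two.2 ⟨by simp, by simp⟩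

theorem parityChar_le_one {ι : Type*} [Fintype ι] (z : ι → ZMod 2) : parityChar ι z ≤ 1 := by
  have habs : |parityChar ι z| = 1 := by
    simp only [parityChar, AddChar.coe_mk, abs_prod, abs_signChar, prod_const_one]
  exact (le_abs_self _).trans habs.le

theorem sum_bern (α : ℝ) : ∑ a, bern α a = 1 := by
  simp [ZMod.sum_univ_two, bern]

theorem sum_signChar_mul_bern (α : ℝ) : ∑ a, signChar a * bern α a = 1 - 2 * α := by
  simp only [ZMod.sum_univ_two, bern, mul_ite, zero_ne_one, ↓reduceIte, signChar_zero,
    signChar_one]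
  ring

theorem sum_parityChar_mul_prod_bern (ι : Type*) [Fintype ι] [DecidableEq ι] (α : ℝ) :
    ∑ x : ι → ZMod 2, parityChar ι x * ∏ i, bern α (x i) = (1 - 2 * α) ^ Fintype.card ι := by
  simp only [parityChar, AddChar.coe_mk, ← prod_mul_distrib]
  rw [← Fintype.prod_sum fun _ a => signChar a * bern α a, sum_signChar_mul_bern, prod_const,
    card_univ]

theorem sum_parityChar_mul_pdist (δ : ℝ) :
    ∑ z, parityChar (Fin 2) z * pdist δ z = (2 * √δ) ^ 2 := by
  have hflip (a b c : ZMod 2) : parityChar (Fin 2) ![a + c, b + c] = signChar a * signChar b := by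
    have hc : signChar c * signChar c = 1 := by
      rw [← abs_mul_abs_self, abs_signChar, one_mul]
    simp only [parityChar, AddChar.coe_mk, Fin.prod_univ_two, Matrix.cons_val_zero,
      Matrix.cons_val_one, AddChar.map_add_eq_mul]
    linear_combination signChar a * signChar b * hc
  have hα : 1 - 2 * (1 / 2 - √δ) = 2 * √δ := by ring
  simp only [pdist, sum_mul_pushforward, Fintype.sum_prod_type, hflip]
  have hsep (a b c : ZMod 2) : signChar a * signChar b
      * (bern (1 / 2 - √δ) a * bern (1 / 2 - √δ) b * bern (1 / 2) c)
      = signChar a * bern (1 / 2 - √δ) a * (signChar b * bern (1 / 2 - √δ) b)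
        * bern (1 / 2) c := by ring
  simp only [hsep, ← mul_sum, ← sum_mul, sum_signChar_mul_bern, sum_bern, hα]
  ring

theorem no_independent_noise_decomposition_general (δ η : ℝ)
    (hη0 : 0 ≤ η)
    (ν : (Fin 2 → ZMod 2) → ℝ) (hν : IsProbDist ν)
    (h : pushforward (fun w : (Fin 2 → ZMod 2) × (Fin 2 → ZMod 2) => w.1 + w.2)
          (fun w => (bern (1 / 2 - η) (w.1 0) * bern (1 / 2 - η) (w.1 1)) * ν w.2)
        = pdist δ) :
    Real.sqrt δ ≤ η := by
  have hX : ∑ x : Fin 2 → ZMod 2, parityChar (Fin 2) x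
      * (bern (1 / 2 - η) (x 0) * bern (1 / 2 - η) (x 1)) = (2 * η) ^ 2 := by
    convert sum_parityChar_mul_prod_bern (Fin 2) (1 / 2 - η) using 1
    · simp [Fin.prod_univ_two]
    · rw [Fintype.card_fin]
      ring
  have hZ := sum_parityChar_mul_pdist δ
  rw [← h, AddChar.sum_mul_pushforward_add _
    (fun x => bern (1 / 2 - η) (x 0) * bern (1 / 2 - η) (x 1)) ν, hX] at hZ
  have hY := sum_mul_le_one_of_isProbDist hν parityChar_le_one
  have hsq : (2 * √δ) ^ 2 ≤ (2 * η) ^ 2 := hZ ▸ mul_le_of_le_one_right (sq_nonneg _) hY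
  have h2 : 2 * √δ ≤ 2 * η :=
    (pow_le_pow_iff_left₀ (by positivity) (by positivity) two_ne_zero).mp hsq
  linarith

/-- If there are independent `X ∼ Ber(1/2 − η)^{⊗2}` and `Y ∼ ν` on `𝔽₂²` with
`X + Y` distributed as `Z = (e₁ + b, e₂ + b)`, then `η ≥ √δ`. -/
theorem no_independent_noise_decomposition (δ η : ℝ)
    (hδ0 : 0 < δ) (hδ1 : δ < 1 / 4) (hη0 : 0 ≤ η) (hη1 : η ≤ 1 / 2)
    (ν : (Fin 2 → ZMod 2) → ℝ) (hν : IsProbDist ν)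
    (h : pushforward (fun w : (Fin 2 → ZMod 2) × (Fin 2 → ZMod 2) => w.1 + w.2)
          (fun w => (bern (1 / 2 - η) (w.1 0) * bern (1 / 2 - η) (w.1 1)) * ν w.2)
        = pdist δ) :
    Real.sqrt δ ≤ η :=
  no_independent_noise_decomposition_general δ η hη0 ν hν h
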